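/- arXiv:2208.00121 — 6 statements merged into one kernel-verified Lean document; each statement's English description precedes it below -/
import Mathlib

section
/- The rational Catalan number Cat_{n,p} := (1/(p+n)) * binomial(p+n, n) is a positive integer whenever p and n are coprime positive integers. -/
/-- For coprime positive integers `n` and `p`, the rational Catalan number
`Cat_{n,p} = (1/(p+n)) * choose (p+n) n` is a positive integer: `p+n` divides
`choose (p+n) n` and the quotient is positive. -/
theorem rational_catalan_pos_int (n p : ℕ) (hn : 0 < n) (hp : 0 < p)
    (h : Nat.Coprime n p) :
    (p + n) ∣ Nat.choose (p + n) n ∧ 0 < Nat.choose (p + n) n / (p + n) := by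
  obtain ⟨m, rfl⟩ := Nat.exists_eq_add_of_lt hn
  have key : (p + (0 + m + 1)) * Nat.choose (p + m) m
      = Nat.choose (p + (0 + m + 1)) (0 + m + 1) * (0 + m + 1) := by
    have := Nat.add_one_mul_choose_eq (p + m) m
    simpa [Nat.succ_eq_add_one, Nat.add_assoc, Nat.add_comm, Nat.add_left_comm] using this
  have hdvd : (p + (0 + m + 1)) ∣ Nat.choose (p + (0 + m + 1)) (0 + m + 1) := by
    have hd : (p + (0 + m + 1)) ∣ Nat.choose (p + (0 + m + 1)) (0 + m + 1) * (0 + m + 1) :=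
      ⟨Nat.choose (p + m) m, key.symm⟩
    have hcop : Nat.Coprime (p + (0 + m + 1)) (0 + m + 1) := by
      exact Nat.coprime_add_self_left.mpr h.symm
    exact (Nat.Coprime.dvd_of_dvd_mul_right hcop hd)
  refine ⟨hdvd, Nat.div_pos (Nat.le_of_dvd (Nat.choose_pos (by omega)) hdvd) (by omega)⟩
end

section
/- For coprime positive integers n and p, the number of lattice paths from (0,0) to (p,n) using unit north and east steps that stay weakly above the diagonal line from (0,0) to (p,n) equals Cat_{n,p} = (1/(p+n)) * binomial(p+n, n). -/
/-!
Cycle lemma. Give a north step weight `p` and an east step weight `-n`, so that the prefix sums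
`S k` of a path are `p` times its height above the diagonal. With `n` north steps the total
weight is `0`, so `S` extends `(p + n)`-periodically, and the rotation of the path starting at
`c` stays weakly above the diagonal exactly when `S c` is a minimum of `S`. Since
`S k ≡ -n k (mod p + n)` and `n` is prime to `p + n`, the values `S 0, …, S (p + n - 1)` are
distinct, so each of the `choose (p + n) n` paths has exactly one rotation that is a Dyck path.
Counting pairs (path, rotation) both ways gives `(p + n) · Cat = choose (p + n) n`.
-/

open Finset

namespace RationalDyck

section CycleLemma

open Fin.NatCast

variable {N : ℕ} [NeZero N]

/-- Partial sums of the `N`-periodic extension of `x`. -/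
def prefixSum (x : Fin N → ℤ) (k : ℕ) : ℤ := ∑ i ∈ range k, x i

def rotate {α : Type*} (c : Fin N) (x : Fin N → α) : Fin N → α := fun i => x (i + c)

def PrefixNonneg (x : Fin N → ℤ) : Prop := ∀ k ≤ N, 0 ≤ prefixSum x k

instance : DecidablePred (PrefixNonneg (N := N)) := fun x => by
  unfold PrefixNonneg; infer_instance

lemma rotate_neg_rotate {α : Type*} (c : Fin N) (x : Fin N → α) :
    rotate (-c) (rotate c x) = x := by
  funext i; simp [rotate]

lemma rotate_rotate_neg {α : Type*} (c : Fin N) (x : Fin N → α) :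
    rotate c (rotate (-c) x) = x := by
  simpa using rotate_neg_rotate (-c) x

lemma sum_rotate (c : Fin N) (x : Fin N → ℤ) : ∑ i, rotate c x i = ∑ i, x i :=
  Equiv.sum_comp (Equiv.addRight c) x

lemma prefixSum_add (x : Fin N → ℤ) (j k : ℕ) :
    prefixSum x (j + k) = prefixSum x j + prefixSum (rotate (j : Fin N) x) k := by
  simp only [prefixSum, sum_range_add, rotate, Nat.cast_add, add_comm (j : Fin N)]

lemma prefixSum_self (x : Fin N → ℤ) : prefixSum x N = ∑ i, x i := by
  simp only [prefixSum, sum_range (fun i => x i), Fin.cast_val_eq_self]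

lemma prefixSum_rotate (c : Fin N) (x : Fin N → ℤ) (k : ℕ) :
    prefixSum (rotate c x) k = prefixSum x (c + k) - prefixSum x c := by
  rw [prefixSum_add, Fin.cast_val_eq_self]; ring

variable {x : Fin N → ℤ}

lemma prefixSum_add_period (hx : ∑ i, x i = 0) (k : ℕ) :
    prefixSum x (k + N) = prefixSum x k := by
  rw [prefixSum_add, prefixSum_self, sum_rotate, hx, add_zero]

lemma prefixSum_mod (hx : ∑ i, x i = 0) (k : ℕ) : prefixSum x (k % N) = prefixSum x k := by
  conv_rhs => rw [← Nat.mod_add_div k N]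
  induction k / N with
  | zero => simp
  | succ q ih => rw [Nat.mul_succ, ← add_assoc, prefixSum_add_period hx, ih]

lemma prefixNonneg_rotate_iff (hx : ∑ i, x i = 0) (c : Fin N) :
    PrefixNonneg (rotate c x) ↔ ∀ j < N, prefixSum x c ≤ prefixSum x j := by
  simp only [PrefixNonneg, prefixSum_rotate, sub_nonneg]
  constructor
  · intro h j hj
    by_cases hcj : (c : ℕ) ≤ j
    · simpa [Nat.add_sub_cancel' hcj] using h (j - c) (by omega)
    · have := h (j + N - c) (by omega)
      rwa [show (c : ℕ) + (j + N - c) = j + N by omega, prefixSum_add_period hx] at this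
  · intro h k _
    rw [← prefixSum_mod hx ((c : ℕ) + k)]
    exact h _ (Nat.mod_lt _ (NeZero.pos N))

/-- The cycle lemma of Dvoretzky and Motzkin. -/
theorem existsUnique_prefixNonneg_rotate (hx : ∑ i, x i = 0)
    (hinj : Set.InjOn (prefixSum x) (Set.Iio N)) : ∃! c : Fin N, PrefixNonneg (rotate c x) := by
  simp only [prefixNonneg_rotate_iff hx]
  obtain ⟨c, -, hc⟩ :=
    (univ : Finset (Fin N)).exists_min_image (fun i => prefixSum x i) univ_nonempty
  refine ⟨c, fun j hj => hc ⟨j, hj⟩ (mem_univ _),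
    fun d hd => Fin.ext (hinj d.isLt c.isLt ?_)⟩
  exact le_antisymm (hd c c.isLt) (hc d (mem_univ _))

end CycleLemma

section Paths

open Fin.NatCast

variable {n p : ℕ}

def stepHeight (n p : ℕ) (b : Bool) : ℤ := if b then p else -n

lemma prefixSum_eq_sum_filter {N : ℕ} [NeZero N] (x : Fin N → ℤ) {k : ℕ} (hk : k ≤ N) :
    prefixSum x k = ∑ i ∈ univ.filter (fun i : Fin N => (i : ℕ) < k), x i := by
  have h := Fin.sum_univ_eq_sum_range (fun i => if i < k then x i else 0) N
  simp only [Fin.cast_val_eq_self] at h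
  rw [sum_filter, h, prefixSum, ← sum_range_add_sum_Ico _ hk,
    sum_ite_of_true fun i hi => mem_range.mp hi,
    sum_ite_of_false fun i hi => not_lt.mpr (mem_Ico.mp hi).1, sum_const_zero, add_zero]

lemma sum_stepHeight_comp {N : ℕ} (f : Fin N → Bool) (s : Finset (Fin N)) :
    ∑ i ∈ s, stepHeight n p (f i) =
      p * #{i ∈ s | f i = true} - n * #{i ∈ s | f i = false} := by
  simp only [stepHeight, sum_ite, sum_const, Int.nsmul_eq_mul, Bool.not_eq_true]
  ring

lemma prefixNonneg_stepHeight_iff {N : ℕ} [NeZero N] (f : Fin N → Bool) :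
    PrefixNonneg (stepHeight n p ∘ f) ↔ ∀ k ≤ N,
      n * #{i : Fin N | (i : ℕ) < k ∧ f i = false} ≤
        p * #{i : Fin N | (i : ℕ) < k ∧ f i = true} := by
  refine forall₂_congr fun k hk => ?_
  rw [prefixSum_eq_sum_filter _ hk, Function.comp_def, sum_stepHeight_comp, filter_filter,
    filter_filter, sub_nonneg]
  exact_mod_cast Iff.rfl

lemma sum_stepHeight (f : Fin (p + n) → Bool) :
    ∑ i, stepHeight n p (f i) = (p + n) * ((#{i | f i = true} : ℤ) - n) := by
  have h := card_filter_add_card_filter_not (s := univ) (fun i => f i = true)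
  simp only [Bool.not_eq_true, card_univ, Fintype.card_fin] at h
  rw [sum_stepHeight_comp]
  replace h : (#{i | f i = true} : ℤ) + #{i | f i = false} = p + n := by exact_mod_cast h
  linear_combination -(n : ℤ) * h

lemma sum_stepHeight_eq_zero_iff [NeZero (p + n)] (f : Fin (p + n) → Bool) :
    ∑ i, stepHeight n p (f i) = 0 ↔ #{i | f i = true} = n := by
  have hN : ((p + n : ℕ) : ℤ) ≠ 0 := Nat.cast_ne_zero.mpr (NeZero.ne _)
  rw [sum_stepHeight, mul_eq_zero, or_iff_right (by exact_mod_cast hN), sub_eq_zero, Nat.cast_inj]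

lemma intCast_prefixSum_stepHeight [NeZero (p + n)] (f : Fin (p + n) → Bool) (k : ℕ) :
    (prefixSum (stepHeight n p ∘ f) k : ZMod (p + n)) = -(n * k) := by
  have hp : (p : ZMod (p + n)) = -n := by
    rw [eq_neg_iff_add_eq_zero]; exact_mod_cast ZMod.natCast_self (p + n)
  have hstep : ∀ b, (stepHeight n p b : ZMod (p + n)) = -n := by
    rintro (_ | _) <;> simp [stepHeight, hp]
  simp [prefixSum, hstep, mul_comm]

lemma injOn_prefixSum_stepHeight [NeZero (p + n)] (hcop : n.Coprime (p + n))
    (f : Fin (p + n) → Bool) :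
    Set.InjOn (prefixSum (stepHeight n p ∘ f)) (Set.Iio (p + n)) := by
  intro j hj k hk hjk
  have hunit : IsUnit (n : ZMod (p + n)) := (ZMod.unitOfCoprime n hcop).isUnit
  have := congrArg (fun z : ℤ => (z : ZMod (p + n))) hjk
  simp only [intCast_prefixSum_stepHeight, neg_inj] at this
  have := congrArg ZMod.val (hunit.mul_left_cancel this)
  rwa [ZMod.val_natCast_of_lt hj, ZMod.val_natCast_of_lt hk] at this

end Paths

section Counting

lemma card_filter_card_eq_true {α : Type*} [Fintype α] [DecidableEq α] (k : ℕ) :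
    #{f : α → Bool | #{i | f i = true} = k} = (Fintype.card α).choose k := by
  rw [← card_univ, ← card_powersetCard]
  refine card_nbij' (fun f => univ.filter fun i => f i = true) (fun s i => decide (i ∈ s))
    ?_ ?_ ?_ ?_
  · intro f hf; simpa using hf
  · intro s hs; simpa [mem_powersetCard] using hs
  · intro f _; funext i; simp
  · intro s _; ext i; simp

variable {n p : ℕ} [NeZero (p + n)]

lemma card_filter_rotate (c : Fin (p + n)) (f : Fin (p + n) → Bool) :
    #{i | rotate c f i = true} = #{i | f i = true} :=
  card_equiv (Equiv.addRight c) fun i => by rw [mem_filter_univ, mem_filter_univ]; rfl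

lemma card_dyck_mul_eq_choose (hcop : n.Coprime (p + n)) :
    #{f : Fin (p + n) → Bool | #{i | f i = true} = n ∧ PrefixNonneg (stepHeight n p ∘ f)} *
      (p + n) = (p + n).choose n := by
  set A := ({f | #{i | f i = true} = n} : Finset (Fin (p + n) → Bool))
  set G := ({f | #{i | f i = true} = n ∧ PrefixNonneg (stepHeight n p ∘ f)} :
    Finset (Fin (p + n) → Bool))
  let r : (Fin (p + n) → Bool) → Fin (p + n) → Prop := fun f c =>
    PrefixNonneg (stepHeight n p ∘ rotate c f)
  have hcycle : ∀ f ∈ A, #(univ.bipartiteAbove r f) = 1 := by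
    intro f hf
    obtain ⟨c, hc, huniq⟩ := existsUnique_prefixNonneg_rotate
      ((sum_stepHeight_eq_zero_iff f).mpr (mem_filter.mp hf).2) (injOn_prefixSum_stepHeight hcop f)
    refine card_eq_one.mpr ⟨c, ?_⟩
    ext d
    simp only [bipartiteAbove, mem_filter, mem_univ, true_and, mem_singleton, r]
    exact ⟨huniq d, fun h => h ▸ hc⟩
  have hrotate : ∀ c, #(A.bipartiteBelow r c) = #G := by
    intro c
    refine card_nbij' (rotate c) (rotate (-c)) ?_ ?_ ?_ ?_
    · intro f hf
      simp_all [A, G, r, bipartiteBelow, card_filter_rotate]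
    · intro f hf
      simp_all [A, G, r, bipartiteBelow, card_filter_rotate, rotate_rotate_neg]
    · intro f _; exact rotate_neg_rotate c f
    · intro f _; exact rotate_rotate_neg c f
  calc #G * (p + n) = ∑ c : Fin (p + n), #(A.bipartiteBelow r c) := by simp [hrotate, mul_comm]
    _ = ∑ f ∈ A, #(univ.bipartiteAbove r f) :=
      (sum_card_bipartiteAbove_eq_sum_card_bipartiteBelow r).symm
    _ = #A := by rw [sum_congr rfl hcycle, card_eq_sum_ones]
    _ = (p + n).choose n := by rw [card_filter_card_eq_true, Fintype.card_fin]

end Counting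

end RationalDyck

open RationalDyck in
theorem rational_dyck_path_count_general (n p : ℕ) (h : Nat.Coprime n p) :
    ((Finset.univ : Finset (Fin (p + n) → Bool)).filter (fun f =>
      (Finset.univ.filter (fun i => f i = true)).card = n ∧
      ∀ k : ℕ, k ≤ p + n →
        n * (Finset.univ.filter (fun i : Fin (p + n) => (i : ℕ) < k ∧ f i = false)).card ≤
          p * (Finset.univ.filter (fun i : Fin (p + n) => (i : ℕ) < k ∧ f i = true)).card)).card
      = Nat.choose (p + n) n / (p + n) := by
  have : NeZero (p + n) := ⟨fun h0 => by simp_all⟩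
  rw [← card_dyck_mul_eq_choose (Nat.coprime_add_self_right.mpr h),
    Nat.mul_div_cancel _ (NeZero.pos _)]
  simp only [prefixNonneg_stepHeight_iff]

/-- For coprime positive integers `n` and `p`, the number of lattice paths
from `(0,0)` to `(p,n)` using unit north and east steps that stay weakly above the diagonal
from `(0,0)` to `(p,n)` equals the rational Catalan number `(1/(p+n)) * choose (p+n) n`.
A path is encoded as `f : Fin (p+n) → Bool`, where `f i = true` means the `i`-th step is
north; the diagonal condition `y ≥ (n/p)·x` at each prefix reads
`p * (#north steps so far) ≥ n * (#east steps so far)`. -/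
theorem rational_dyck_path_count (n p : ℕ) (hn : 0 < n) (hp : 0 < p)
    (h : Nat.Coprime n p) :
    ((Finset.univ : Finset (Fin (p + n) → Bool)).filter (fun f =>
      (Finset.univ.filter (fun i => f i = true)).card = n ∧
      ∀ k : ℕ, k ≤ p + n →
        n * (Finset.univ.filter (fun i : Fin (p + n) => (i : ℕ) < k ∧ f i = false)).card ≤
          p * (Finset.univ.filter (fun i : Fin (p + n) => (i : ℕ) < k ∧ f i = true)).card)).card
      = Nat.choose (p + n) n / (p + n) :=
  rational_dyck_path_count_general n p h
end

section
/- In a finite Coxeter group W with simple reflections S, a subword u of a word w = (s_1,...,s_m) is distinguished (i.e., the partial product u_(i) satisfies u_(i) ≤ u_(i-1)·s_i in weak order for all i) if and only if every colored reflection in inv_e(u) has even color, where the color of position j with u_j = e counts indices i < j with u_i ≠ e and s_i^{u_(i)} = s_j^{u_(j)}. -/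
/-!
Tits' argument for the strong exchange property. Letting each simple reflection `s` act on
`W × ℤ/2` by `(t, ε) ↦ (s t s, ε + [t = s])` respects the Coxeter relations, because the left
inversion sequence of the word `s s' s s' ⋯` of length `2 m(s, s')` lists every reflection an
even number of times. Hence the parity `η(w, t)` of the number of occurrences of `t` in the left
inversion sequence of a word for `w` depends only on `w`. If it is odd, `t` occurs in the
sequence of a reduced word, so `ℓ(t w) < ℓ(w)`; the converse follows by applying this to `t w`,
as `η(w, t) = 1 + η(t w, t)`.

For a subword, `η(u_(j), t)` counts the used positions `i < j` whose reflection is `t`. At a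
skipped position `u_(j) s_j = t u_(j)` with `t = s_j^{u_(j)}`, so the distinguished condition
there says that the color `η(u_(j), t)` is even.
-/

open scoped Classical

namespace Deodhar

variable {B : Type*} {W : Type*} [Group W] {M : CoxeterMatrix B}

/-- Given a word `w` in the simple-reflection indices and a subword-selector
`f : Fin w.length → Bool` (`f j = true` means the letter at position `j` is used,
`f j = false` means it is skipped, i.e. replaced by the identity `e`), the partial
product `u_(i) = u_1 ⋯ u_i` of the first `i` letters of the subword. -/
noncomputable def pp (cs : CoxeterSystem M W) (w : List B) (f : Fin w.length → Bool)
    (i : ℕ) : W :=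
  ((((List.finRange w.length).take i)).map
    (fun j => if f j then cs.simple (w.get j) else 1)).prod

/-- The full product of the subword. -/
noncomputable def sprod (cs : CoxeterSystem M W) (w : List B)
    (f : Fin w.length → Bool) : W :=
  pp cs w f w.length

/-- The subword selected by `f` is distinguished: for each position `j`,
`ℓ(u_(j+1)) ≤ ℓ(u_(j) · s_j)`, i.e. `u_(j+1) ≤ u_(j) s_j` in weak order. -/
def Distinguished (cs : CoxeterSystem M W) (w : List B) (f : Fin w.length → Bool) : Prop :=
  ∀ j : Fin w.length,
    cs.length (pp cs w f ((j : ℕ) + 1)) ≤ cs.length (pp cs w f (j : ℕ) * cs.simple (w.get j))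

/-- The number of skips `e_u = #{j : u_j = e}`. -/
def skips (w : List B) (f : Fin w.length → Bool) : ℕ :=
  (Finset.univ.filter (fun j : Fin w.length => f j = false)).card

/-- The number of descents `d_u = #{j : u_(j+1) < u_(j)}`. -/
noncomputable def descents (cs : CoxeterSystem M W) (w : List B)
    (f : Fin w.length → Bool) : ℕ :=
  (Finset.univ.filter (fun j : Fin w.length =>
    cs.length (pp cs w f ((j : ℕ) + 1)) < cs.length (pp cs w f (j : ℕ)))).card

/-- The reflection `s_j^{u_(j)} = u_(j) s_j u_(j)⁻¹` associated to position `j`. -/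
noncomputable def reflAt (cs : CoxeterSystem M W) (w : List B) (f : Fin w.length → Bool)
    (j : Fin w.length) : W :=
  pp cs w f (j : ℕ) * cs.simple (w.get j) * (pp cs w f (j : ℕ))⁻¹

/-- The color `k_j = #{i < j : u_i ≠ e and s_i^{u_(i)} = s_j^{u_(j)}}` of position `j`. -/
noncomputable def color (cs : CoxeterSystem M W) (w : List B) (f : Fin w.length → Bool)
    (j : Fin w.length) : ℕ :=
  (Finset.univ.filter (fun i : Fin w.length =>
    (i : ℕ) < (j : ℕ) ∧ f i = true ∧ reflAt cs w f i = reflAt cs w f j)).card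

end Deodhar

theorem inv_mul_mul_eq_iff_eq_mul_mul_inv {G : Type*} [Group G] {x t s : G} :
    x⁻¹ * t * x = s ↔ t = x * s * x⁻¹ := by
  constructor <;> rintro rfl <;> group

namespace CoxeterSystem

variable {B W : Type*} [Group W] {M : CoxeterMatrix B} (cs : CoxeterSystem M W)

theorem reflectionPerm_involutive (i : B) :
    Function.Involutive fun p : W × ZMod 2 =>
      (cs.simple i * p.1 * cs.simple i, p.2 + if p.1 = cs.simple i then 1 else 0) := by
  rintro ⟨t, ε⟩
  have hconj : cs.simple i * (cs.simple i * t * cs.simple i) * cs.simple i = t := by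
    simp [mul_assoc]
  have hfix : cs.simple i * t * cs.simple i = cs.simple i ↔ t = cs.simple i := by
    constructor
    · intro h
      rw [← hconj, h]
      simp
    · rintro rfl
      simp
  ext
  · exact hconj
  · simp only [hfix]
    split_ifs <;> decide +revert

noncomputable def reflectionPerm (i : B) : Equiv.Perm (W × ZMod 2) :=
  (cs.reflectionPerm_involutive i).toPerm

theorem reflectionPerm_apply (i : B) (t : W) (ε : ZMod 2) :
    cs.reflectionPerm i (t, ε) =
      (cs.simple i * t * cs.simple i, ε + if t = cs.simple i then 1 else 0) :=
  rfl

theorem prod_map_reflectionPerm_apply (ω : List B) (t : W) (ε : ZMod 2) :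
    (ω.map cs.reflectionPerm).prod ((cs.wordProd ω)⁻¹ * t * cs.wordProd ω, ε) =
      (t, ε + (cs.leftInvSeq ω).count t) := by
  induction ω using List.reverseRecOn generalizing ε with
  | nil => simp
  | append_singleton ω i ih =>
    have hconj :
        cs.simple i * ((cs.wordProd ω * cs.simple i)⁻¹ * t * (cs.wordProd ω * cs.simple i)) *
          cs.simple i = (cs.wordProd ω)⁻¹ * t * cs.wordProd ω := by
      simp [mul_assoc]
    have hfix : (cs.wordProd ω * cs.simple i)⁻¹ * t * (cs.wordProd ω * cs.simple i) =
        cs.simple i ↔ cs.wordProd ω * cs.simple i * (cs.wordProd ω)⁻¹ = t := by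
      rw [inv_mul_mul_eq_iff_eq_mul_mul_inv, eq_comm]
      simp [mul_assoc]
    rw [← List.concat_eq_append, cs.leftInvSeq_concat, cs.wordProd_concat, List.concat_eq_append,
      List.map_append, List.prod_append, Equiv.Perm.mul_apply, List.map_singleton,
      List.prod_singleton, reflectionPerm_apply, hconj, ih, List.concat_eq_append,
      List.count_append, List.count_singleton]
    simp only [hfix, beq_iff_eq, Nat.cast_add]
    split_ifs <;> simp [add_comm, add_left_comm]

theorem prod_map_alternatingWord_two_mul {G : Type*} [Monoid G] (f : B → G) (i i' : B)
    (m : ℕ) :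
    ((alternatingWord i i' (2 * m)).map f).prod = (f i * f i') ^ m := by
  induction m with
  | zero => simp [alternatingWord]
  | succ m ih =>
    rw [show 2 * (m + 1) = 2 * m + 1 + 1 by ring, alternatingWord_succ', alternatingWord_succ']
    simp [ih, pow_succ', mul_assoc]

theorem leftInvSeq_alternatingWord_two_mul (i i' : B) (p : ℕ) :
    cs.leftInvSeq (alternatingWord i i' (2 * p)) =
      (List.range (2 * p)).map fun k => cs.simple i * (cs.simple i' * cs.simple i) ^ k := by
  refine List.ext_getElem (by simp) fun k hk _ => ?_
  rw [getElem_leftInvSeq_alternatingWord cs i i' p k (by simpa using hk),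
    prod_alternatingWord_eq_mul_pow]
  simp [show (2 * k + 1) / 2 = k by omega]

theorem even_count_leftInvSeq_alternatingWord (i i' : B) (t : W) :
    Even ((cs.leftInvSeq (alternatingWord i i' (2 * M i i'))).count t) := by
  have hperiodic : ∀ k, cs.simple i * (cs.simple i' * cs.simple i) ^ (M i i' + k) =
      cs.simple i * (cs.simple i' * cs.simple i) ^ k := by
    intro k
    rw [pow_add, cs.simple_mul_simple_pow', one_mul]
  rw [leftInvSeq_alternatingWord_two_mul, two_mul, List.range_add, List.map_append, List.map_map]
  simp only [Function.comp_def, hperiodic, List.count_append]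
  exact ⟨_, rfl⟩

theorem isLiftable_reflectionPerm : M.IsLiftable cs.reflectionPerm := by
  intro i i'
  ext ⟨t, ε⟩ : 1
  have hword := cs.prod_map_reflectionPerm_apply (alternatingWord i i' (2 * M i i')) t ε
  have hone : cs.wordProd (alternatingWord i i' (2 * M i i')) = 1 := by
    simp [prod_alternatingWord_eq_mul_pow]
  rw [hone, inv_one, one_mul, mul_one, prod_map_alternatingWord_two_mul,
    ZMod.natCast_eq_zero_iff_even.2 (cs.even_count_leftInvSeq_alternatingWord i i' t),
    add_zero] at hword
  exact hword

noncomputable def reflectionRep : W →* Equiv.Perm (W × ZMod 2) :=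
  cs.lift ⟨cs.reflectionPerm, cs.isLiftable_reflectionPerm⟩

theorem reflectionRep_wordProd (ω : List B) :
    cs.reflectionRep (cs.wordProd ω) = (ω.map cs.reflectionPerm).prod := by
  rw [wordProd, map_list_prod, List.map_map]
  congr 2
  funext i
  exact cs.lift_apply_simple cs.isLiftable_reflectionPerm i

noncomputable def inversionParity (w t : W) : ZMod 2 :=
  (cs.reflectionRep w (w⁻¹ * t * w, 0)).2

theorem reflectionRep_apply (w t : W) (ε : ZMod 2) :
    cs.reflectionRep w (w⁻¹ * t * w, ε) = (t, ε + cs.inversionParity w t) := by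
  obtain ⟨ω, rfl⟩ := cs.wordProd_surjective w
  simp [inversionParity, reflectionRep_wordProd, prod_map_reflectionPerm_apply]

theorem inversionParity_wordProd (ω : List B) (t : W) :
    cs.inversionParity (cs.wordProd ω) t = (cs.leftInvSeq ω).count t := by
  simp [inversionParity, reflectionRep_wordProd, prod_map_reflectionPerm_apply]

theorem inversionParity_mul (u v t : W) :
    cs.inversionParity (u * v) t =
      cs.inversionParity u t + cs.inversionParity v (u⁻¹ * t * u) := by
  have hconj : (u * v)⁻¹ * t * (u * v) = v⁻¹ * (u⁻¹ * t * u) * v := by group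
  rw [inversionParity, hconj, map_mul, Equiv.Perm.mul_apply, reflectionRep_apply,
    reflectionRep_apply, zero_add, add_comm]

theorem inversionParity_one (t : W) : cs.inversionParity 1 t = 0 := by
  simpa using cs.inversionParity_wordProd [] t

theorem inversionParity_simple (i : B) (t : W) :
    cs.inversionParity (cs.simple i) t = if t = cs.simple i then 1 else 0 := by
  have hword := cs.inversionParity_wordProd [i] t
  simp only [wordProd_singleton, leftInvSeq_singleton, List.count_singleton, beq_iff_eq] at hword
  rw [hword]
  by_cases h : t = cs.simple i
  · simp [h]
  · simp [h, Ne.symm h]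

theorem inversionParity_self {t : W} (ht : cs.IsReflection t) : cs.inversionParity t t = 1 := by
  obtain ⟨x, i, rfl⟩ := ht
  have hconj : x⁻¹ * (x * cs.simple i * x⁻¹) * x = cs.simple i := by group
  have hconj' :
      (x * cs.simple i)⁻¹ * (x * cs.simple i * x⁻¹) * (x * cs.simple i) = cs.simple i := by
    group
  have hcancel := cs.inversionParity_mul x x⁻¹ (x * cs.simple i * x⁻¹)
  rw [mul_inv_cancel, inversionParity_one, hconj] at hcancel
  rw [inversionParity_mul, inversionParity_mul, hconj, hconj', inversionParity_simple, if_pos rfl]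
  linear_combination -hcancel

theorem inversionParity_eq_one_iff (w : W) {t : W} (ht : cs.IsReflection t) :
    cs.inversionParity w t = 1 ↔ cs.length (t * w) < cs.length w := by
  have forward : ∀ w : W, cs.inversionParity w t = 1 → cs.length (t * w) < cs.length w := by
    intro w hw
    obtain ⟨ω, hω, rfl⟩ := cs.exists_isReduced w
    rw [inversionParity_wordProd, ZMod.natCast_eq_one_iff_odd] at hw
    exact (cs.isLeftInversion_of_mem_leftInvSeq hω (List.count_pos_iff.1 hw.pos)).2
  refine ⟨forward w, fun hlt => ?_⟩
  have hsplit : cs.inversionParity w t = 1 + cs.inversionParity (t * w) t := by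
    simpa [inversionParity_self cs ht, ← mul_assoc, ht.mul_self, ht.inv] using
      cs.inversionParity_mul t (t * w) t
  have hnot : cs.inversionParity (t * w) t ≠ 1 := fun h => by
    have := forward (t * w) h
    rw [← mul_assoc, ht.mul_self, one_mul] at this
    omega
  have hZMod2 : ∀ a : ZMod 2, a ≠ 1 → 1 + a = 1 := by decide
  rw [hsplit, hZMod2 _ hnot]

end CoxeterSystem

theorem Fin.card_filter_lt_succ_and {n : ℕ} (P : Fin n → Prop) [DecidablePred P] {j : ℕ}
    (hj : j < n) :
    (Finset.univ.filter fun i : Fin n => (i : ℕ) < j + 1 ∧ P i).card =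
      (Finset.univ.filter fun i : Fin n => (i : ℕ) < j ∧ P i).card +
        if P ⟨j, hj⟩ then 1 else 0 := by
  have hsplit : (Finset.univ.filter fun i : Fin n => (i : ℕ) < j + 1 ∧ P i) =
      (Finset.univ.filter fun i : Fin n => (i : ℕ) < j ∧ P i) ∪
        Finset.univ.filter fun i : Fin n => i = ⟨j, hj⟩ ∧ P i := by
    ext i
    simp only [Finset.mem_filter, Finset.mem_univ, true_and, Finset.mem_union, Fin.ext_iff,
      Nat.lt_succ_iff_lt_or_eq, or_and_right]
  rw [hsplit, Finset.card_union_of_disjoint]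
  · split_ifs with hP
    · congr 1
      rw [Finset.card_eq_one]
      exact ⟨_, Finset.ext fun i => by
        simp only [Finset.mem_filter, Finset.mem_univ, true_and, Finset.mem_singleton]
        exact and_iff_left_of_imp (· ▸ hP)⟩
    · simp [hP]
  · exact Finset.disjoint_filter.2 fun i _ hlt heq =>
      absurd (congrArg Fin.val heq.1) (Nat.ne_of_lt hlt.1)

namespace Deodhar

variable {B W : Type*} [Group W] {M : CoxeterMatrix B} (cs : CoxeterSystem M W) (w : List B)
  (f : Fin w.length → Bool)

theorem pp_zero : pp cs w f 0 = 1 := by simp [pp]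

theorem pp_succ (j : Fin w.length) :
    pp cs w f (j + 1) = pp cs w f j * if f j then cs.simple (w.get j) else 1 := by
  have hj : (j : ℕ) < (List.finRange w.length).length := by simp
  rw [pp, pp, List.take_add_one, List.getElem?_eq_getElem hj, List.getElem_finRange]
  simp

theorem inversionParity_pp (t : W) {j : ℕ} (hj : j ≤ w.length) :
    cs.inversionParity (pp cs w f j) t =
      (Finset.univ.filter fun i : Fin w.length =>
        (i : ℕ) < j ∧ f i = true ∧ reflAt cs w f i = t).card := by
  induction j with
  | zero => simp [pp_zero, cs.inversionParity_one]
  | succ j ih =>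
    rw [Fin.card_filter_lt_succ_and _ hj, Nat.cast_add, ← ih (Nat.le_of_succ_le hj),
      pp_succ cs w f ⟨j, hj⟩]
    cases hf : f ⟨j, hj⟩
    · simp
    · rw [if_pos rfl, cs.inversionParity_mul, cs.inversionParity_simple,
        inv_mul_mul_eq_iff_eq_mul_mul_inv]
      simp [reflAt, eq_comm]

theorem distinguished_at_iff (j : Fin w.length) :
    cs.length (pp cs w f (j + 1)) ≤ cs.length (pp cs w f j * cs.simple (w.get j)) ↔
      (f j = false → Even (color cs w f j)) := by
  cases hf : f j
  · have hrefl : cs.IsReflection (reflAt cs w f j) := ⟨pp cs w f j, w.get j, rfl⟩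
    have hmul : pp cs w f j * cs.simple (w.get j) = reflAt cs w f j * pp cs w f j := by
      simp [reflAt]
    rw [pp_succ, hf, if_neg Bool.false_ne_true, mul_one, hmul, ← not_lt,
      ← cs.inversionParity_eq_one_iff _ hrefl, inversionParity_pp cs w f _ j.isLt.le,
      ZMod.natCast_eq_one_iff_odd, Nat.not_odd_iff_even]
    simp [color]
  · simp [pp_succ, hf]

end Deodhar

open Deodhar in
theorem distinguished_iff_even_colors_general
    {B : Type*} {W : Type*} [Group W] {M : CoxeterMatrix B}
    (cs : CoxeterSystem M W) (w : List B) (f : Fin w.length → Bool) :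
    Distinguished cs w f ↔ ∀ j : Fin w.length, f j = false → Even (color cs w f j) :=
  forall_congr' (distinguished_at_iff cs w f)

open Deodhar in
/-- In a finite Coxeter group `W`, a subword `u` of a word `w = (s_1,...,s_m)`
is distinguished if and only if every colored reflection in `inv_e(u)` has even color,
i.e., for every skipped position `j` (`f j = false`), the color `k_j` is even. -/
theorem distinguished_iff_even_colors
    {B : Type*} {W : Type*} [Group W] [Finite W] {M : CoxeterMatrix B}
    (cs : CoxeterSystem M W) (w : List B) (f : Fin w.length → Bool) :
    Distinguished cs w f ↔ ∀ j : Fin w.length, f j = false → Even (color cs w f j) :=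
  distinguished_iff_even_colors_general cs w f
end

section
/- In the Hecke algebra H_W over Z[q,q^{-1}] of a finite Coxeter group, for every word w and every u ∈ W one has D(T_w) = Σ_{u ∈ W} R_{u,w}(q^{-1}) q^{-ℓ(u)} T_u, where D is the bar involution with D(q) = q^{-1} and D(T_s) = T_s^{-1} for simple s, T_w is the product of T_{s_i} over the word, and R_{u,w} are the R-polynomials defined by the Deodhar recurrence. -/
open scoped Classical

namespace Deodhar

/-- Auxiliary recursion for the `R`-polynomials, processing the word from the right
(the list argument is the reversed word): `R_{u,∅} = δ_{u,e}`; `R_{u,ws} = R_{us,w}` if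
`us < u`, and `R_{u,ws} = q·R_{us,w} + (q-1)·R_{u,w}` if `us > u`. -/
noncomputable def Raux {B : Type*} {W : Type*} [Group W] {M : CoxeterMatrix B}
    (cs : CoxeterSystem M W) : List B → W → Polynomial ℤ
  | [], u => if u = 1 then 1 else 0
  | i :: rest, u =>
    if cs.length (u * cs.simple i) < cs.length u then Raux cs rest (u * cs.simple i)
    else Polynomial.X * Raux cs rest (u * cs.simple i) +
      (Polynomial.X - 1) * Raux cs rest u

/-- The `R`-polynomial `R_{u,w}(q)` of a word `w` and an element `u`, defined by the
Deodhar recurrence. -/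
noncomputable def Rpol {B : Type*} {W : Type*} [Group W] {M : CoxeterMatrix B}
    (cs : CoxeterSystem M W) (w : List B) (u : W) : Polynomial ℤ :=
  Raux cs w.reverse u

end Deodhar

section Aux

lemma myRingInverse_eq {H : Type*} [MonoidWithZero H] {a b : H} (h : IsUnit a)
    (h1 : a * b = 1) : Ring.inverse a = b := by
  rw [← h.unit_spec, Ring.inverse_unit]
  exact Units.inv_eq_of_mul_eq_one_right (by rw [h.unit_spec]; exact h1)

variable {B : Type*} {W : Type*} [Group W] {M : CoxeterMatrix B}
    (cs : CoxeterSystem M W)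
    {H : Type*} [Ring H] [Algebra (LaurentPolynomial ℤ) H]
    (Tf : W → H)
    (hone : Tf 1 = 1)
    (hunit : ∀ v : W, IsUnit (Tf v))
    (hmul : ∀ (v : W) (i : B),
      if cs.length (v * cs.simple i) < cs.length v
      then Tf v * Tf (cs.simple i)
        = (LaurentPolynomial.T 1 : LaurentPolynomial ℤ) • Tf (v * cs.simple i)
          + ((LaurentPolynomial.T 1 : LaurentPolynomial ℤ) - 1) • Tf v
      else Tf v * Tf (cs.simple i) = Tf (v * cs.simple i))

open LaurentPolynomial

include hone hunit hmul in
lemma inverse_simple_eq (i : B) :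
    Ring.inverse (Tf (cs.simple i))
      = (T (-1) : LaurentPolynomial ℤ) • Tf (cs.simple i)
        + ((T (-1) : LaurentPolynomial ℤ) - 1) • (1 : H) := by
  have hss := hmul (cs.simple i) i
  rw [cs.simple_mul_simple_self, cs.length_one, cs.length_simple, if_pos Nat.zero_lt_one,
    hone] at hss
  apply myRingInverse_eq (hunit _)
  rw [mul_add, mul_smul_comm, mul_smul_comm, hss, mul_one]
  rw [smul_add, smul_smul, smul_smul]
  match_scalars <;>
    · try ring_nf
      try rw [← T_add]
      try norm_num

include hone hunit hmul in
lemma mul_inverse_simple (u : W) (i : B) :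
    Tf u * Ring.inverse (Tf (cs.simple i))
      = if cs.length (u * cs.simple i) < cs.length u then Tf (u * cs.simple i)
        else (T (-1) : LaurentPolynomial ℤ) • Tf (u * cs.simple i)
          + ((T (-1) : LaurentPolynomial ℤ) - 1) • Tf u := by
  rw [inverse_simple_eq cs Tf hone hunit hmul]
  have h := hmul u i
  split at h <;> rename_i hc <;> [rw [if_pos hc]; rw [if_neg hc]] <;>
    rw [mul_add, mul_smul_comm, mul_smul_comm, h, mul_one]
  · rw [smul_add, smul_smul, smul_smul]
    match_scalars <;>
    · try ring_nf
      try rw [← T_add]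
      try norm_num

end Aux

open Deodhar in
/-- In the Hecke algebra `H_W` over `ℤ[q,q⁻¹]` of a finite Coxeter group
(axiomatized as a `ℤ[q,q⁻¹]`-algebra `H` with a family `Tf : W → H` of units satisfying
`Tf 1 = 1` and the Hecke multiplication relations), for every word `w` one has
`D(T_w) = Σ_{u ∈ W} R_{u,w}(q⁻¹) q^{-ℓ(u)} T_u`, where `D` is the bar involution with
`D(q) = q⁻¹` and `D(T_s) = T_s⁻¹` for simple `s`, `T_w` is the product of the `T_{s_i}`
along the word `w`, and the `R_{u,w}` are the `R`-polynomials of the Deodhar recurrence. -/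
theorem bar_involution_R_polynomial_expansion
    {B : Type*} {W : Type*} [Group W] [Fintype W] {M : CoxeterMatrix B}
    (cs : CoxeterSystem M W)
    {H : Type*} [Ring H] [Algebra (LaurentPolynomial ℤ) H]
    (Tf : W → H)
    (hone : Tf 1 = 1)
    (hunit : ∀ v : W, IsUnit (Tf v))
    (hmul : ∀ (v : W) (i : B),
      if cs.length (v * cs.simple i) < cs.length v
      then Tf v * Tf (cs.simple i)
        = (LaurentPolynomial.T 1 : LaurentPolynomial ℤ) • Tf (v * cs.simple i)
          + ((LaurentPolynomial.T 1 : LaurentPolynomial ℤ) - 1) • Tf v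
      else Tf v * Tf (cs.simple i) = Tf (v * cs.simple i))
    (D : H →+* H)
    (hD : ∀ a : LaurentPolynomial ℤ, D (algebraMap (LaurentPolynomial ℤ) H a)
      = algebraMap (LaurentPolynomial ℤ) H (LaurentPolynomial.invert a))
    (hDs : ∀ i : B, D (Tf (cs.simple i)) = Ring.inverse (Tf (cs.simple i)))
    (w : List B) :
    D ((w.map (fun i => Tf (cs.simple i))).prod)
      = ∑ u : W,
          algebraMap (LaurentPolynomial ℤ) H
            (LaurentPolynomial.invert ((Rpol cs w u).toLaurent) *
              LaurentPolynomial.T (-(cs.length u : ℤ))) * Tf u := by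
  classical
  open LaurentPolynomial in
  simp_rw [← Algebra.smul_def]
  induction w using List.reverseRecOn with
  | nil =>
      simp only [List.map_nil, List.prod_nil, map_one]
      rw [Finset.sum_eq_single 1]
      · simp [Rpol, Raux, cs.length_one, hone]
      · intro u _ hu
        have h0 : Rpol cs [] u = 0 := by simp [Rpol, Raux, hu]
        simp only [h0, map_zero, zero_mul, zero_smul]
      · intro h; exact absurd (Finset.mem_univ 1) h
  | append_singleton w i ih =>
      have hrec : ∀ u : W,
          invert ((Rpol cs (w ++ [i]) u).toLaurent) * T (-(cs.length u : ℤ))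
          = if cs.length (u * cs.simple i) < cs.length u
            then invert ((Rpol cs w (u * cs.simple i)).toLaurent) * T (-(cs.length u : ℤ))
            else (T (-1) * invert ((Rpol cs w (u * cs.simple i)).toLaurent)
                  + (T (-1) - 1) * invert ((Rpol cs w u).toLaurent)) * T (-(cs.length u : ℤ)) := by
        intro u
        simp only [Rpol, List.reverse_append, List.reverse_cons, List.reverse_nil,
          List.nil_append, List.singleton_append, Raux]
        split <;>
          simp [map_add, map_mul, map_sub, Polynomial.toLaurent_X, invert_T, map_one]
      simp only [List.map_append, List.prod_append, List.map_cons, List.map_nil,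
        List.prod_cons, List.prod_nil, mul_one, map_mul, hDs, ih]
      rw [Finset.sum_mul]
      have key : ∀ u : W,
          ((invert ((Rpol cs w u).toLaurent) * T (-(cs.length u : ℤ))) • Tf u)
              * Ring.inverse (Tf (cs.simple i))
          = (if cs.length (u * cs.simple i) < cs.length u
              then invert ((Rpol cs w u).toLaurent) * T (-(cs.length u : ℤ))
              else T (-1) * (invert ((Rpol cs w u).toLaurent) * T (-(cs.length u : ℤ))))
                • Tf (u * cs.simple i)
            + (if cs.length (u * cs.simple i) < cs.length u then 0
              else (T (-1) - 1) * (invert ((Rpol cs w u).toLaurent) * T (-(cs.length u : ℤ))))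
                • Tf u := by
        intro u
        rw [smul_mul_assoc, mul_inverse_simple cs Tf hone hunit hmul]
        split
        · simp
        · rw [smul_add, smul_smul, smul_smul,
            mul_comm _ ((T (-1) : LaurentPolynomial ℤ)),
            mul_comm _ ((T (-1) : LaurentPolynomial ℤ) - 1)]
      simp_rw [key]
      rw [Finset.sum_add_distrib]
      have hre : ∑ u : W, (if cs.length (u * cs.simple i) < cs.length u
              then invert ((Rpol cs w u).toLaurent) * T (-(cs.length u : ℤ))
              else T (-1) * (invert ((Rpol cs w u).toLaurent) * T (-(cs.length u : ℤ))))
                • Tf (u * cs.simple i)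
          = ∑ v : W, (if cs.length v < cs.length (v * cs.simple i)
              then invert ((Rpol cs w (v * cs.simple i)).toLaurent)
                * T (-(cs.length (v * cs.simple i) : ℤ))
              else T (-1) * (invert ((Rpol cs w (v * cs.simple i)).toLaurent)
                * T (-(cs.length (v * cs.simple i) : ℤ)))) • Tf v := by
        apply Fintype.sum_equiv (Equiv.mulRight (cs.simple i))
        intro u
        have huu : u * cs.simple i * cs.simple i = u := by
          rw [mul_assoc, cs.simple_mul_simple_self, mul_one]
        simp only [Equiv.coe_mulRight, huu]
      rw [hre, ← Finset.sum_add_distrib]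
      apply Finset.sum_congr rfl
      intro v _
      rw [← add_smul, hrec]
      congr 1
      have hlen := cs.length_mul_simple v i
      by_cases hv : cs.length (v * cs.simple i) < cs.length v
      · have h1 : cs.length v = cs.length (v * cs.simple i) + 1 := by omega
        rw [if_pos hv, if_neg (by omega), if_pos hv, h1]
        have he : (-((cs.length (v * cs.simple i) + 1 : ℕ) : ℤ))
            = -1 + -(cs.length (v * cs.simple i) : ℤ) := by push_cast; ring
        rw [he, T_add]
        ring
      · have h1 : cs.length (v * cs.simple i) = cs.length v + 1 := by omega
        rw [if_neg hv, if_pos (by omega), if_neg hv, h1]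
        have he : (-((cs.length v + 1 : ℕ) : ℤ))
            = -1 + -(cs.length v : ℤ) := by push_cast; ring
        rw [he, T_add]
        ring
end

section
/- Let τ^- be the trace on the Hecke algebra H_W defined by τ^-(T_w^{-1}) = δ_{w,e}. Then for any word w and u ∈ W, R_{u,w}(q) = τ^-(T_w · T_u^{-1}). -/
open scoped Classical

open Deodhar in
/-- Let `τ⁻` be the trace on the Hecke algebra `H_W` (axiomatized as a
`ℤ[q,q⁻¹]`-linear functional on a `ℤ[q,q⁻¹]`-algebra `H` carrying a family `Tf : W → H`
of units satisfying the Hecke relations) defined by `τ⁻(T_w⁻¹) = δ_{w,e}`. Then for any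
word `w` and `u ∈ W`, `R_{u,w}(q) = τ⁻(T_w · T_u⁻¹)`. -/
theorem rpol_eq_trace
    {B : Type*} {W : Type*} [Group W] [Fintype W] {M : CoxeterMatrix B}
    (cs : CoxeterSystem M W)
    {H : Type*} [Ring H] [Algebra (LaurentPolynomial ℤ) H]
    (Tf : W → H)
    (hone : Tf 1 = 1)
    (hunit : ∀ v : W, IsUnit (Tf v))
    (hmul : ∀ (v : W) (i : B),
      if cs.length (v * cs.simple i) < cs.length v
      then Tf v * Tf (cs.simple i)
        = (LaurentPolynomial.T 1 : LaurentPolynomial ℤ) • Tf (v * cs.simple i)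
          + ((LaurentPolynomial.T 1 : LaurentPolynomial ℤ) - 1) • Tf v
      else Tf v * Tf (cs.simple i) = Tf (v * cs.simple i))
    (τ : H →ₗ[LaurentPolynomial ℤ] LaurentPolynomial ℤ)
    (hτ : ∀ v : W, τ (Ring.inverse (Tf v)) = if v = 1 then 1 else 0)
    (w : List B) (u : W) :
    (Rpol cs w u).toLaurent
      = τ ((w.map (fun i => Tf (cs.simple i))).prod * Ring.inverse (Tf u)) := by
  have hss : ∀ (u : W) (i : B), u * cs.simple i * cs.simple i = u := by
    intro u i
    rw [mul_assoc, cs.simple_mul_simple_self, mul_one]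
  have keyA : ∀ (u : W) (i : B), cs.length (u * cs.simple i) < cs.length u →
      Tf (cs.simple i) * Ring.inverse (Tf u) = Ring.inverse (Tf (u * cs.simple i)) := by
    intro u i h
    have h2 := hmul (u * cs.simple i) i
    rw [if_neg (by rw [hss]; omega), hss] at h2
    apply (hunit (u * cs.simple i)).mul_left_cancel
    rw [← mul_assoc, h2, Ring.mul_inverse_cancel _ (hunit u),
      Ring.mul_inverse_cancel _ (hunit _)]
  have keyB : ∀ (u : W) (i : B), ¬ cs.length (u * cs.simple i) < cs.length u →
      Tf (cs.simple i) * Ring.inverse (Tf u)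
        = (LaurentPolynomial.T 1 : LaurentPolynomial ℤ) • Ring.inverse (Tf (u * cs.simple i))
          + ((LaurentPolynomial.T 1 : LaurentPolynomial ℤ) - 1) • Ring.inverse (Tf u) := by
    intro u i h
    have hne := cs.length_mul_simple_ne u i
    have h2 := hmul (u * cs.simple i) i
    rw [if_pos (by rw [hss]; omega), hss] at h2
    apply (hunit (u * cs.simple i)).mul_left_cancel
    rw [← mul_assoc, h2, add_mul, smul_mul_assoc, smul_mul_assoc,
      Ring.mul_inverse_cancel _ (hunit u), mul_add, mul_smul_comm, mul_smul_comm,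
      Ring.mul_inverse_cancel _ (hunit _)]
  induction w using List.reverseRecOn generalizing u with
  | nil =>
      simp only [Rpol, Raux, List.reverse_nil, List.map_nil, List.prod_nil, one_mul, hτ]
      split <;> simp
  | append_singleton l i ih =>
      have hrev : (l ++ [i]).reverse = i :: l.reverse := by simp
      have hR : Rpol cs (l ++ [i]) u = Raux cs (i :: l.reverse) u := by rw [Rpol, hrev]
      have hprod : ((l ++ [i]).map (fun j => Tf (cs.simple j))).prod
          = (l.map (fun j => Tf (cs.simple j))).prod * Tf (cs.simple i) := by simp
      rw [hR, hprod, Raux]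
      by_cases h : cs.length (u * cs.simple i) < cs.length u
      · rw [if_pos h, mul_assoc, keyA u i h]
        exact ih (u * cs.simple i)
      · rw [if_neg h, mul_assoc, keyB u i h, mul_add, mul_smul_comm, mul_smul_comm,
          τ.map_add, τ.map_smul, τ.map_smul, ← ih (u * cs.simple i), ← ih u]
        simp [Rpol, smul_eq_mul]
end

section
/- For coprime positive integers n and p with ζ = exp(2πi p/n), the evaluation ζ^{binomial(k+1,2)} · qbinomial(n-1, k) at q = ζ equals (-1)^k for all 0 ≤ k ≤ n-1. -/
open Polynomial

/-- The Gaussian binomial coefficient `qbinom a b` as a polynomial in `q`, defined by the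
`q`-Pascal recurrence `qbinom (a+1) (b+1) = qbinom a b + q^(b+1) * qbinom a (b+1)`. -/
noncomputable def qbinom : ℕ → ℕ → Polynomial ℤ
  | _, 0 => 1
  | 0, _ + 1 => 0
  | a + 1, b + 1 => qbinom a b + Polynomial.X ^ (b + 1) * qbinom a (b + 1)

lemma qbinom_eq_zero : ∀ (a b : ℕ), a < b → qbinom a b = 0 := by
  intro a
  induction a with
  | zero =>
    intro b hb
    match b, hb with
    | b + 1, _ => rw [qbinom]
  | succ a ih =>
    intro b hb
    match b, hb with
    | b + 1, hb =>
      rw [qbinom, ih b (by omega), ih (b + 1) (by omega)]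
      ring

lemma qbinom_key : ∀ (a b : ℕ),
    qbinom a b * ∏ i ∈ Finset.range b, ((X : Polynomial ℤ) ^ (i + 1) - 1) =
    ∏ i ∈ Finset.range b, ((X : Polynomial ℤ) ^ (a - i) - 1) := by
  intro a
  induction a with
  | zero =>
    intro b
    cases b with
    | zero => simp [qbinom]
    | succ b =>
      rw [qbinom_eq_zero 0 (b + 1) (by omega), zero_mul]
      symm
      apply Finset.prod_eq_zero (Finset.mem_range.mpr (show 0 < b + 1 by omega))
      simp
  | succ a ih =>
    intro b
    cases b with
    | zero => simp [qbinom]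
    | succ b =>
      rcases le_or_gt b a with hba | hba
      · have h1 := ih b
        have h2 := ih (b + 1)
        rw [Finset.prod_range_succ] at h2
        rw [Finset.prod_range_succ (f := fun i => (X : Polynomial ℤ) ^ (a - i) - 1)] at h2
        rw [qbinom, Finset.prod_range_succ, Finset.prod_range_succ']
        simp only [Nat.succ_sub_succ, Nat.sub_zero]
        have e : (X : Polynomial ℤ) ^ (b + 1) * X ^ (a - b) = X ^ (a + 1) := by
          rw [← pow_add]
          congr 1
          omega
        linear_combination ((X : Polynomial ℤ) ^ (b + 1) - 1) * h1 + (X : Polynomial ℤ) ^ (b + 1) * h2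
          + (∏ i ∈ Finset.range b, ((X : Polynomial ℤ) ^ (a - i) - 1)) * e
      · rw [qbinom_eq_zero (a + 1) (b + 1) (by omega), zero_mul]
        symm
        apply Finset.prod_eq_zero (Finset.mem_range.mpr (show a + 1 < b + 1 by omega))
        simp

lemma sum_aux (n : ℕ) : ∀ k, k ≤ n - 1 → 0 < n →
    Nat.choose (k + 1) 2 + ∑ i ∈ Finset.range k, (n - 1 - i) = k * n := by
  intro k
  induction k with
  | zero => simp
  | succ k ih =>
    intro hk hn
    have ih' := ih (by omega) hn
    have e2 : Nat.choose (k + 1 + 1) 2 = (k + 1) + Nat.choose (k + 1) 2 := by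
      rw [Nat.choose_succ_succ, Nat.choose_one_right]
    have e3 : (k + 1) * n = k * n + n := by ring
    rw [Finset.sum_range_succ]
    omega

/-- For coprime positive integers `n` and `p` with `ζ = exp(2πi·p/n)`,
the evaluation `ζ^(binomial (k+1) 2) * qbinomial(n-1, k)` at `q = ζ` equals `(-1)^k`
for all `0 ≤ k ≤ n-1`. -/
theorem qbinom_eval_root_of_unity (n p k : ℕ) (hn : 0 < n) (hp : 0 < p)
    (h : Nat.Coprime n p) (hk : k ≤ n - 1)
    (ζ : ℂ) (hζ : ζ = Complex.exp (2 * Real.pi * Complex.I * p / n)) :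
    ζ ^ (Nat.choose (k + 1) 2) * Polynomial.aeval ζ (qbinom (n - 1) k) = (-1 : ℂ) ^ k := by
  have hprim : IsPrimitiveRoot ζ n := by
    have := Complex.isPrimitiveRoot_exp_of_coprime p n hn.ne' h.symm
    rwa [show (2 * ↑Real.pi * Complex.I * (↑p / ↑n) : ℂ) = 2 * Real.pi * Complex.I * p / n by
      ring, ← hζ] at this
  have hkey := congrArg (aeval ζ) (qbinom_key (n - 1) k)
  simp only [map_mul, map_prod, map_sub, map_pow, map_one, aeval_X] at hkey
  have hD : ∏ i ∈ Finset.range k, (ζ ^ (i + 1) - 1) ≠ 0 := by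
    apply Finset.prod_ne_zero_iff.mpr
    intro i hi
    have hi' := Finset.mem_range.mp hi
    exact sub_ne_zero.mpr (hprim.pow_ne_one_of_pos_of_lt (by omega) (by omega))
  have hR : ∏ i ∈ Finset.range k, (ζ ^ (n - 1 - i) - 1) =
      (∏ i ∈ Finset.range k, (-ζ ^ (n - 1 - i))) * ∏ i ∈ Finset.range k, (ζ ^ (i + 1) - 1) := by
    rw [← Finset.prod_mul_distrib]
    apply Finset.prod_congr rfl
    intro i hi
    have hi' := Finset.mem_range.mp hi
    have h1 : ζ ^ (n - 1 - i) * ζ ^ (i + 1) = 1 := by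
      rw [← pow_add, show n - 1 - i + (i + 1) = n by omega, hprim.pow_eq_one]
    linear_combination h1
  have hA : (aeval ζ) (qbinom (n - 1) k) = ∏ i ∈ Finset.range k, (-ζ ^ (n - 1 - i)) := by
    apply mul_right_cancel₀ hD
    rw [hkey, hR]
  have hP : ∏ i ∈ Finset.range k, (-ζ ^ (n - 1 - i)) =
      (-1 : ℂ) ^ k * ζ ^ (∑ i ∈ Finset.range k, (n - 1 - i)) := by
    rw [Finset.prod_congr rfl (fun i _ => show -ζ ^ (n - 1 - i) = (-1) * ζ ^ (n - 1 - i) by ring),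
      Finset.prod_mul_distrib, Finset.prod_const, Finset.card_range,
      Finset.prod_pow_eq_pow_sum]
  have hsum := sum_aux n k hk hn
  rw [hA, hP, ← mul_assoc, mul_comm (ζ ^ Nat.choose (k + 1) 2) ((-1 : ℂ) ^ k), mul_assoc,
    ← pow_add, hsum, mul_comm k n, pow_mul, hprim.pow_eq_one, one_pow, mul_one]
end
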